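/- For every real y ≥ 0, one has 2√π · y · erfc(−y) · erfc(y) · e^{y²} − 4·erf(y) ≤ 0. -/

import Mathlib

open Real MeasureTheory

/-- erf(x) = (2/√π)·∫_0^x e^{−t²} dt -/
noncomputable def erf (x : ℝ) : ℝ := (2 / Real.sqrt Real.pi) * ∫ t in (0:ℝ)..x, Real.exp (-t ^ 2)

/-- erfc(x) = (2/√π)·∫_x^∞ e^{−t²} dt -/
noncomputable def erfc (x : ℝ) : ℝ := (2 / Real.sqrt Real.pi) * ∫ t in Set.Ioi x, Real.exp (-t ^ 2)

/-!
Write `u y = gaussIntegral y = ∫₀^y e^{-t²}`, so that `erf y = (2/√π) u y` and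
`erfc (±y) = (2/√π) (√π/2 ∓ u y)`. The inequality then says that
`gap y = u e^{-y²} - y (π/4 - u²)` is nonnegative.
Here `gap 0 = 0`, and the tail bound `y ∫_y^∞ e^{-t²} ≤ e^{-y²}/2` gives `gap y ≥ -(√π/2) e^{-y²}`.
Moreover `gap' = e^{-2y²} + u² - π/4 ≤ e^{-2y²}` and `gap'' = 2 e^{-y²} (u - 2y e^{-y²})`, where
the last factor, `gapCurvature`, vanishes at `0` and has derivative `e^{-y²} (4y² - 1)`: it is
nonpositive up to some `b` and nonnegative afterwards. So `gap'` decreases and then increases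
while staying below a function tending to `0`; once negative it stays nonpositive. Hence `gap`
increases from `0` and then decreases, never below its limit `0` at infinity.
-/

open Set Filter Topology

section

variable {f f' g h : ℝ → ℝ}

lemma MonotoneOn.nonpos_of_eventually_le {z : ℝ} (hg : MonotoneOn g (Ici z))
    (hh : Tendsto h atTop (𝓝 0)) (hgh : ∀ᶠ x in atTop, g x ≤ h x) : g z ≤ 0 :=
  ge_of_tendsto hh <| by
    filter_upwards [hgh, eventually_ge_atTop z] with x hx hzx
    exact (hg self_mem_Ici hzx hzx).trans hx

lemma AntitoneOn.nonneg_of_eventually_le {z : ℝ} (hf : AntitoneOn f (Ici z))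
    (hh : Tendsto h atTop (𝓝 0)) (hhf : ∀ᶠ x in atTop, h x ≤ f x) : 0 ≤ f z :=
  le_of_tendsto hh <| by
    filter_upwards [hhf, eventually_ge_atTop z] with x hx hzx
    exact hx.trans (hf self_mem_Ici hzx hzx)

lemma exists_sign_change_of_antitoneOn_of_monotoneOn {a c d : ℝ} (hac : a ≤ c) (hcd : c ≤ d)
    (hanti : AntitoneOn g (Icc a c)) (hmono : MonotoneOn g (Ici c))
    (hcont : ContinuousOn g (Icc c d)) (hga : g a ≤ 0) (hgd : 0 < g d) :
    ∃ b, a ≤ b ∧ (∀ x ∈ Icc a b, g x ≤ 0) ∧ ∀ x, b ≤ x → 0 ≤ g x := by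
  have hgc : g c ≤ 0 := (hanti ⟨le_rfl, hac⟩ ⟨hac, le_rfl⟩ hac).trans hga
  obtain ⟨b, ⟨hcb, -⟩, hgb⟩ := intermediate_value_Icc hcd hcont ⟨hgc, hgd.le⟩
  refine ⟨b, hac.trans hcb, fun x hx => ?_,
    fun x hbx => hgb.ge.trans (hmono hcb (hcb.trans hbx) hbx)⟩
  rcases le_total x c with hxc | hcx
  · exact (hanti ⟨le_rfl, hac⟩ ⟨hx.1, hxc⟩ hx.1).trans hga
  · exact (hmono hcx hcb hx.2).trans hgb.le

lemma nonpos_of_neg_of_antitoneOn_of_monotoneOn {a b x z : ℝ}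
    (hanti : AntitoneOn g (Icc a b)) (hmono : MonotoneOn g (Ici b))
    (hh : Tendsto h atTop (𝓝 0)) (hgh : ∀ᶠ x in atTop, g x ≤ h x)
    (hax : a ≤ x) (hxz : x ≤ z) (hgx : g x < 0) : g z ≤ 0 := by
  rcases le_total b z with hbz | hzb
  · exact (hmono.mono (Ici_subset_Ici.mpr hbz)).nonpos_of_eventually_le hh hgh
  · exact (hanti ⟨hax, hxz.trans hzb⟩ ⟨hax.trans hxz, hzb⟩ hxz).trans hgx.le

lemma nonneg_of_hasDerivAt_of_deriv_neg_imp_nonpos {a y : ℝ}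
    (hf : ∀ x, HasDerivAt f (f' x) x) (hfa : f a = 0)
    (hf' : ∀ x z, a ≤ x → x ≤ z → f' x < 0 → f' z ≤ 0)
    (hh : Tendsto h atTop (𝓝 0)) (hhf : ∀ᶠ x in atTop, h x ≤ f x) (hay : a ≤ y) : 0 ≤ f y := by
  have hcont : Continuous f := continuous_iff_continuousAt.2 fun x => (hf x).continuousAt
  by_cases hpos : ∀ x ∈ Icc a y, 0 ≤ f' x
  · have hmono : MonotoneOn f (Icc a y) :=
      monotoneOn_of_hasDerivWithinAt_nonneg (convex_Icc a y) hcont.continuousOn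
        (fun x _ => (hf x).hasDerivWithinAt) fun x hx => hpos x (interior_subset hx)
    exact hfa ▸ hmono ⟨le_rfl, hay⟩ ⟨hay, le_rfl⟩ hay
  · push Not at hpos
    obtain ⟨c, ⟨hac, hcy⟩, hc⟩ := hpos
    have hanti : AntitoneOn f (Ici y) :=
      antitoneOn_of_hasDerivWithinAt_nonpos (convex_Ici y) hcont.continuousOn
        (fun x _ => (hf x).hasDerivWithinAt)
        fun x hx => hf' c x hac (hcy.trans (interior_subset hx)) hc
    exact hanti.nonneg_of_eventually_le hh hhf

end

lemma integrable_exp_neg_sq : Integrable fun t : ℝ => exp (-t ^ 2) := by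
  simpa using integrable_exp_neg_mul_sq one_pos

lemma hasDerivAt_exp_neg_sq (x : ℝ) :
    HasDerivAt (fun t : ℝ => exp (-t ^ 2)) (-(2 * x) * exp (-x ^ 2)) x := by
  simpa [mul_comm] using ((hasDerivAt_pow 2 x).neg).exp

lemma tendsto_exp_neg_sq_atTop : Tendsto (fun t : ℝ => exp (-t ^ 2)) atTop (𝓝 0) :=
  tendsto_exp_atBot.comp <| tendsto_neg_atTop_atBot.comp <| tendsto_pow_atTop two_ne_zero

lemma integral_Ioi_mul_exp_neg_sq (y : ℝ) :
    ∫ t in Ioi y, t * exp (-t ^ 2) = exp (-y ^ 2) / 2 := by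
  have hderiv (x : ℝ) : HasDerivAt (fun t => -exp (-t ^ 2) / 2) (x * exp (-x ^ 2)) x :=
    ((hasDerivAt_exp_neg_sq x).neg.div_const 2).congr_deriv (by ring)
  have hlim : Tendsto (fun t => -exp (-t ^ 2) / 2) atTop (𝓝 0) := by
    simpa using (tendsto_exp_neg_sq_atTop.neg).div_const 2
  have hint : IntegrableOn (fun t => t * exp (-t ^ 2)) (Ioi y) := by
    simpa using (integrable_mul_exp_neg_mul_sq one_pos).integrableOn
  rw [integral_Ioi_of_hasDerivAt_of_tendsto (hderiv y).continuousAt.continuousWithinAt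
    (fun x _ => hderiv x) hint hlim]
  ring

lemma mul_integral_Ioi_exp_neg_sq_le (y : ℝ) :
    y * ∫ t in Ioi y, exp (-t ^ 2) ≤ exp (-y ^ 2) / 2 := by
  rw [← integral_Ioi_mul_exp_neg_sq, ← integral_const_mul]
  refine setIntegral_mono_on (integrable_exp_neg_sq.const_mul y).integrableOn
    (by simpa using (integrable_mul_exp_neg_mul_sq one_pos).integrableOn) measurableSet_Ioi
    fun x hx => ?_
  exact mul_le_mul_of_nonneg_right (le_of_lt hx) (exp_pos _).le

noncomputable def gaussIntegral (y : ℝ) : ℝ := ∫ t in (0 : ℝ)..y, exp (-t ^ 2)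

lemma hasDerivAt_gaussIntegral (y : ℝ) : HasDerivAt gaussIntegral (exp (-y ^ 2)) y :=
  (Continuous.integral_hasStrictDerivAt (by fun_prop) 0 y).hasDerivAt

lemma monotone_gaussIntegral : Monotone gaussIntegral :=
  monotone_of_hasDerivAt_nonneg hasDerivAt_gaussIntegral fun _ => (exp_pos _).le

lemma gaussIntegral_zero : gaussIntegral 0 = 0 := intervalIntegral.integral_same

lemma gaussIntegral_nonneg {y : ℝ} (hy : 0 ≤ y) : 0 ≤ gaussIntegral y :=
  gaussIntegral_zero ▸ monotone_gaussIntegral hy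

lemma gaussIntegral_neg (y : ℝ) : gaussIntegral (-y) = -gaussIntegral y := by
  have := intervalIntegral.integral_comp_neg (a := 0) (b := y) fun t : ℝ => exp (-t ^ 2)
  simp only [neg_sq, neg_zero] at this
  rw [gaussIntegral, gaussIntegral, intervalIntegral.integral_symm, ← this]

lemma integral_Ioi_exp_neg_sq (y : ℝ) :
    ∫ t in Ioi y, exp (-t ^ 2) = √π / 2 - gaussIntegral y := by
  have h := intervalIntegral.integral_Ioi_sub_Ioi' (a := 0) (b := y)
    integrable_exp_neg_sq.integrableOn integrable_exp_neg_sq.integrableOn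
  have h0 : ∫ t in Ioi (0 : ℝ), exp (-t ^ 2) = √π / 2 := by
    simpa using integral_gaussian_Ioi 1
  rw [gaussIntegral, ← h, h0]
  ring

lemma gaussIntegral_le (y : ℝ) : gaussIntegral y ≤ √π / 2 := by
  have : 0 ≤ ∫ t in Ioi y, exp (-t ^ 2) := by positivity
  linarith [integral_Ioi_exp_neg_sq y]

lemma exp_neg_one_le_gaussIntegral_one : exp (-1) ≤ gaussIntegral 1 := by
  have := intervalIntegral.integral_mono_on zero_le_one (intervalIntegrable_const (μ := volume))
    ((by fun_prop : Continuous fun t : ℝ => exp (-t ^ 2)).intervalIntegrable 0 1)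
    fun x hx => exp_le_exp.2 (by nlinarith [hx.1, hx.2] : -1 ≤ -x ^ 2)
  simpa [gaussIntegral] using this

lemma erf_eq (y : ℝ) : erf y = 2 / √π * gaussIntegral y := rfl

lemma erfc_eq (y : ℝ) : erfc y = 2 / √π * (√π / 2 - gaussIntegral y) := by
  rw [erfc, integral_Ioi_exp_neg_sq]

noncomputable def gapCurvature (y : ℝ) : ℝ := gaussIntegral y - 2 * y * exp (-y ^ 2)

noncomputable def gapDeriv (y : ℝ) : ℝ := exp (-y ^ 2) ^ 2 + gaussIntegral y ^ 2 - π / 4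

noncomputable def gap (y : ℝ) : ℝ :=
  gaussIntegral y * exp (-y ^ 2) + y * (gaussIntegral y ^ 2 - π / 4)

lemma hasDerivAt_gapCurvature (x : ℝ) :
    HasDerivAt gapCurvature (exp (-x ^ 2) * (4 * x ^ 2 - 1)) x :=
  ((hasDerivAt_gaussIntegral x).sub
    (((hasDerivAt_id' x).const_mul 2).mul (hasDerivAt_exp_neg_sq x))).congr_deriv (by ring)

lemma hasDerivAt_gapDeriv (x : ℝ) :
    HasDerivAt gapDeriv (2 * exp (-x ^ 2) * gapCurvature x) x :=
  ((((hasDerivAt_exp_neg_sq x).fun_pow 2).add ((hasDerivAt_gaussIntegral x).fun_pow 2)).sub_const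
    (π / 4)).congr_deriv (by simp only [gapCurvature]; ring)

lemma hasDerivAt_gap (x : ℝ) : HasDerivAt gap (gapDeriv x) x :=
  (((hasDerivAt_gaussIntegral x).mul (hasDerivAt_exp_neg_sq x)).add ((hasDerivAt_id' x).mul
    (((hasDerivAt_gaussIntegral x).fun_pow 2).sub_const (π / 4)))).congr_deriv
    (by simp only [gapDeriv]; ring)

lemma gapCurvature_two_pos : 0 < gapCurvature 2 := by
  have hu : exp (-1) ≤ gaussIntegral 2 :=
    exp_neg_one_le_gaussIntegral_one.trans (monotone_gaussIntegral one_le_two)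
  have he : exp 3 * exp (-4) = exp (-1) := by rw [← exp_add]; norm_num
  have h3 : (3 : ℝ) + 1 < exp 3 := add_one_lt_exp three_ne_zero
  have h4 := exp_pos (-4)
  norm_num [gapCurvature]
  nlinarith

lemma exists_gapCurvature_sign_change :
    ∃ b, 0 ≤ b ∧ (∀ x ∈ Icc 0 b, gapCurvature x ≤ 0) ∧ ∀ x, b ≤ x → 0 ≤ gapCurvature x := by
  have hcont : Continuous gapCurvature :=
    continuous_iff_continuousAt.2 fun x => (hasDerivAt_gapCurvature x).continuousAt
  refine exists_sign_change_of_antitoneOn_of_monotoneOn (c := 1 / 2) (d := 2) (by norm_num)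
    (by norm_num) ?_ ?_ hcont.continuousOn (by simp [gapCurvature, gaussIntegral_zero])
    gapCurvature_two_pos
  · refine antitoneOn_of_hasDerivWithinAt_nonpos (convex_Icc _ _) hcont.continuousOn
      (fun x _ => (hasDerivAt_gapCurvature x).hasDerivWithinAt) fun x hx => ?_
    rw [interior_Icc] at hx
    exact mul_nonpos_of_nonneg_of_nonpos (exp_pos _).le (by nlinarith [hx.1, hx.2])
  · refine monotoneOn_of_hasDerivWithinAt_nonneg (convex_Ici _) hcont.continuousOn
      (fun x _ => (hasDerivAt_gapCurvature x).hasDerivWithinAt) fun x hx => ?_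
    rw [interior_Ici] at hx
    exact mul_nonneg (exp_pos _).le (by nlinarith [hx.out])

lemma gapDeriv_le_sq_exp {x : ℝ} (hx : 0 ≤ x) : gapDeriv x ≤ exp (-x ^ 2) ^ 2 := by
  have h0 := gaussIntegral_nonneg hx
  have h1 := gaussIntegral_le x
  have hπ : √π ^ 2 = π := sq_sqrt pi_pos.le
  simp only [gapDeriv]
  nlinarith

lemma gapDeriv_nonpos_of_neg {x z : ℝ} (hx : 0 ≤ x) (hxz : x ≤ z) (hneg : gapDeriv x < 0) :
    gapDeriv z ≤ 0 := by
  obtain ⟨b, -, hle, hge⟩ := exists_gapCurvature_sign_change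
  have hcont : Continuous gapDeriv :=
    continuous_iff_continuousAt.2 fun x => (hasDerivAt_gapDeriv x).continuousAt
  refine nonpos_of_neg_of_antitoneOn_of_monotoneOn (a := 0) (b := b)
    (h := fun x => exp (-x ^ 2) ^ 2) ?_ ?_ (by simpa using tendsto_exp_neg_sq_atTop.pow 2)
    ((eventually_ge_atTop 0).mono fun x => gapDeriv_le_sq_exp) hx hxz hneg
  · refine antitoneOn_of_hasDerivWithinAt_nonpos (convex_Icc _ _) hcont.continuousOn
      (fun x _ => (hasDerivAt_gapDeriv x).hasDerivWithinAt) fun x hx => ?_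
    exact mul_nonpos_of_nonneg_of_nonpos (by positivity) (hle x (interior_subset hx))
  · refine monotoneOn_of_hasDerivWithinAt_nonneg (convex_Ici _) hcont.continuousOn
      (fun x _ => (hasDerivAt_gapDeriv x).hasDerivWithinAt) fun x hx => ?_
    exact mul_nonneg (by positivity) (hge x (interior_subset hx))

lemma neg_mul_exp_le_gap {x : ℝ} (hx : 0 ≤ x) : -(√π / 2) * exp (-x ^ 2) ≤ gap x := by
  have htail := mul_integral_Ioi_exp_neg_sq_le x
  rw [integral_Ioi_exp_neg_sq] at htail
  have h0 := gaussIntegral_nonneg hx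
  have h1 := gaussIntegral_le x
  have hπ : √π ^ 2 = π := sq_sqrt pi_pos.le
  have he := exp_pos (-x ^ 2)
  simp only [gap]
  nlinarith [mul_le_mul_of_nonneg_right htail (by linarith : 0 ≤ √π / 2 + gaussIntegral x)]

lemma gap_nonneg {y : ℝ} (hy : 0 ≤ y) : 0 ≤ gap y :=
  nonneg_of_hasDerivAt_of_deriv_neg_imp_nonpos hasDerivAt_gap
    (by simp [gap, gaussIntegral_zero]) (fun _ _ hx hxz => gapDeriv_nonpos_of_neg hx hxz)
    (by simpa using tendsto_exp_neg_sq_atTop.const_mul (-(√π / 2)))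
    ((eventually_ge_atTop 0).mono fun _ => neg_mul_exp_le_gap) hy

theorem stmt4 (y : ℝ) (hy : 0 ≤ y) :
    2 * Real.sqrt Real.pi * y * erfc (-y) * erfc y * Real.exp (y ^ 2) - 4 * erf y ≤ 0 := by
  have hπ : √π ^ 2 = π := sq_sqrt pi_pos.le
  have key : 2 * √π * y * erfc (-y) * erfc y * exp (y ^ 2) - 4 * erf y
      = -(8 / √π * exp (y ^ 2) * gap y) := by
    rw [erfc_eq, erfc_eq, erf_eq, gaussIntegral_neg, gap, exp_neg]
    field_simp
    linear_combination (8 * y * exp (y ^ 2)) * hπ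
  rw [key, neg_nonpos]
  exact mul_nonneg (by positivity) (gap_nonneg hy)
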